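/- arXiv:math/9302209 — 3 statements merged into one kernel-verified Lean document; each statement's English description precedes it below -/
import Mathlib

section
/- (Borwein–Fitzpatrick) Let T : E → 2^{E*} be a monotone operator on a real Banach space E and let x ∈ D(T). If x is an absorbing point of D(T) (in particular, if x ∈ int D(T)), then T is locally bounded at x. -/
/-! Rescale each `u' ∈ T u` with `‖u - x‖ ≤ 1` to `(1 + ‖u'‖ ‖u - x‖)⁻¹ • u'`. Monotonicity against
the points `x + t • z ∈ D(T)` bounds this family pointwise above on every ray, and hence, as
`x` is an absorbing point, pointwise in absolute value; Banach–Steinhaus makes the bound uniform,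
`‖u'‖ ≤ K (1 + ‖u'‖ ‖u - x‖)`, which bounds `‖u'‖` by `2K` once `‖u - x‖ ≤ 1 / (2K)`. -/

section

variable {E : Type*} [NormedAddCommGroup E] [NormedSpace ℝ E]

def IsMonotoneOperator (T : E → Set (StrongDual ℝ E)) : Prop :=
  ∀ x y x' y', x' ∈ T x → y' ∈ T y → 0 ≤ (x' - y') (x - y)

namespace IsMonotoneOperator

variable {T : E → Set (StrongDual ℝ E)}

theorem apply_sub_le (hT : IsMonotoneOperator T) {u y : E} {u' y' : StrongDual ℝ E}
    (hu : u' ∈ T u) (hy : y' ∈ T y) (x : E) :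
    u' (y - x) ≤ ‖u'‖ * ‖u - x‖ + ‖y'‖ * (‖u - x‖ + ‖y - x‖) := by
  have hmono := hT u y u' y' hu hy
  have hu' : u' (u - x) ≤ ‖u'‖ * ‖u - x‖ := (le_abs_self _).trans (u'.le_opNorm _)
  have hy' : y' (y - u) ≤ ‖y'‖ * (‖u - x‖ + ‖y - x‖) :=
    calc y' (y - u) ≤ ‖y'‖ * ‖y - u‖ := (le_abs_self _).trans (y'.le_opNorm _)
      _ ≤ ‖y'‖ * (‖u - x‖ + ‖y - x‖) := by
        gcongr
        linarith [norm_sub_le_norm_sub_add_norm_sub y x u, norm_sub_rev x u]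
  have hsplit : u' (y - x) = u' (u - x) - (u' - y') (u - y) + y' (y - u) := by
    simp only [map_sub, sub_apply]
    ring
  linarith

theorem inv_mul_apply_sub_le (hT : IsMonotoneOperator T) {x u y : E} {u' y' : StrongDual ℝ E}
    (hu : u' ∈ T u) (hy : y' ∈ T y) (hux : ‖u - x‖ ≤ 1) :
    (1 + ‖u'‖ * ‖u - x‖)⁻¹ * u' (y - x) ≤ 1 + ‖y'‖ * (1 + ‖y - x‖) := by
  have hD : 0 < 1 + ‖u'‖ * ‖u - x‖ := by positivity
  rw [inv_mul_le_iff₀ hD]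
  have := hT.apply_sub_le hu hy x
  nlinarith [mul_nonneg (norm_nonneg y') (sub_nonneg.2 hux),
    mul_nonneg (mul_nonneg (norm_nonneg u') (norm_nonneg (u - x)))
      (mul_nonneg (norm_nonneg y') (add_nonneg zero_le_one (norm_nonneg (y - x))))]

end IsMonotoneOperator

namespace ContinuousLinearMap

theorem abs_apply_le_of_apply_smul_le {f : StrongDual ℝ E} {z : E}
    {s t A B : ℝ} (hs : 0 < s) (ht : 0 < t) (hA : f (s • z) ≤ A) (hB : f (t • -z) ≤ B) :
    |f z| ≤ max (A / s) (B / t) := by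
  rw [map_smul, smul_eq_mul] at hA
  rw [map_smul, map_neg, smul_eq_mul] at hB
  rw [abs_le]
  constructor
  · have : -f z ≤ B / t := by rw [le_div_iff₀ ht]; linarith
    linarith [le_max_right (A / s) (B / t)]
  · have : f z ≤ A / s := by rw [le_div_iff₀ hs]; linarith
    exact this.trans (le_max_left _ _)

end ContinuousLinearMap

namespace IsMonotoneOperator

variable [CompleteSpace E] {T : E → Set (StrongDual ℝ E)} {x : E}

theorem exists_norm_inv_smul_le (hT : IsMonotoneOperator T)
    (habs : ∀ z : E, ∃ t : ℝ, 0 < t ∧ (T (x + t • z)).Nonempty) :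
    ∃ K, ∀ u u', u' ∈ T u → ‖u - x‖ ≤ 1 → ‖(1 + ‖u'‖ * ‖u - x‖)⁻¹ • u'‖ ≤ K := by
  let ι := {p : E × StrongDual ℝ E // p.2 ∈ T p.1 ∧ ‖p.1 - x‖ ≤ 1}
  let g : ι → StrongDual ℝ E := fun p => (1 + ‖p.1.2‖ * ‖p.1.1 - x‖)⁻¹ • p.1.2
  have hray : ∀ z, ∃ t : ℝ, 0 < t ∧ ∃ C, ∀ p : ι, g p (t • z) ≤ C := by
    intro z
    obtain ⟨t, ht, y', hy'⟩ := habs z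
    refine ⟨t, ht, 1 + ‖y'‖ * (1 + ‖t • z‖), fun p => ?_⟩
    simpa only [g, smul_apply, smul_eq_mul, add_sub_cancel_left] using
      hT.inv_mul_apply_sub_le p.2.1 hy' p.2.2
  have hpointwise : ∀ z, ∃ C, ∀ p : ι, ‖g p z‖ ≤ C := by
    intro z
    obtain ⟨s, hs, A, hA⟩ := hray z
    obtain ⟨t, ht, B, hB⟩ := hray (-z)
    exact ⟨max (A / s) (B / t), fun p =>
      (g p).abs_apply_le_of_apply_smul_le hs ht (hA p) (hB p)⟩
  obtain ⟨K, hK⟩ := banach_steinhaus hpointwise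
  exact ⟨K, fun u u' hu hux => hK ⟨(u, u'), hu, hux⟩⟩

theorem exists_forall_norm_le (hT : IsMonotoneOperator T)
    (habs : ∀ z : E, ∃ t : ℝ, 0 < t ∧ (T (x + t • z)).Nonempty) :
    ∃ r > 0, ∃ K, ∀ u u', u' ∈ T u → ‖u - x‖ < r → ‖u'‖ ≤ K := by
  obtain ⟨K, hK⟩ := hT.exists_norm_inv_smul_le habs
  set K' := max K 1
  have hK' : 0 < K' := lt_max_of_lt_right one_pos
  refine ⟨min 1 (2 * K')⁻¹, by positivity, 2 * K', fun u u' hu hux => ?_⟩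
  have hux_le_one : ‖u - x‖ ≤ 1 := hux.le.trans (min_le_left _ _)
  have hK'ux : K' * ‖u - x‖ ≤ 1 / 2 :=
    calc K' * ‖u - x‖ ≤ K' * (2 * K')⁻¹ := by gcongr; exact hux.le.trans (min_le_right _ _)
      _ = 1 / 2 := by field_simp
  have hD : 0 < 1 + ‖u'‖ * ‖u - x‖ := by positivity
  have h := (hK u u' hu hux_le_one).trans (le_max_left K 1)
  rw [norm_smul, Real.norm_eq_abs, abs_of_pos (inv_pos.2 hD), inv_mul_le_iff₀ hD] at h
  nlinarith [mul_le_mul_of_nonneg_left hK'ux (norm_nonneg u')]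

end IsMonotoneOperator

end

theorem borwein_fitzpatrick_local_boundedness_general
    {E : Type*} [NormedAddCommGroup E] [NormedSpace ℝ E] [CompleteSpace E]
    (T : E → Set (StrongDual ℝ E))
    (hmono : ∀ x y x' y', x' ∈ T x → y' ∈ T y → 0 ≤ (x' - y') (x - y))
    (x : E)
    (habs : ∀ z : E, ∃ t : ℝ, 0 < t ∧ (T (x + t • z)).Nonempty) :
    ∃ U ∈ nhds x, Bornology.IsBounded (⋃ u ∈ U, T u) := by
  obtain ⟨r, hr, K, hK⟩ := IsMonotoneOperator.exists_forall_norm_le hmono habs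
  refine ⟨Metric.ball x r, Metric.ball_mem_nhds x hr, isBounded_iff_forall_norm_le.2 ⟨K, ?_⟩⟩
  simp only [Set.mem_iUnion]
  rintro u' ⟨u, hu, hu'⟩
  exact hK u u' hu' (by rwa [Metric.mem_ball, dist_eq_norm] at hu)

/-- **Borwein–Fitzpatrick.** If `T : E → 2^{E*}` is monotone on a real Banach space `E` and
`x ∈ D(T)` is an absorbing point of `D(T)` (i.e. `D(T) - x` is absorbing: for every `z ∈ E`
there is `t > 0` with `t • z ∈ D(T) - x`), then `T` is locally bounded at `x`. -/
theorem borwein_fitzpatrick_local_boundedness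
    {E : Type*} [NormedAddCommGroup E] [NormedSpace ℝ E] [CompleteSpace E]
    (T : E → Set (StrongDual ℝ E))
    (hmono : ∀ x y x' y', x' ∈ T x → y' ∈ T y → 0 ≤ (x' - y') (x - y))
    (x : E) (hx : (T x).Nonempty)
    (habs : ∀ z : E, ∃ t : ℝ, 0 < t ∧ (T (x + t • z)).Nonempty) :
    ∃ U ∈ nhds x, Bornology.IsBounded (⋃ u ∈ U, T u) :=
  borwein_fitzpatrick_local_boundedness_general T hmono x habs
end

section
/- (Veselý) Let T : E → 2^{E*} be maximal monotone on a real Banach space E and suppose the closure of D(T) is convex. If x belongs to the closure of D(T) and T is locally bounded at x, then x ∈ int D(T). -/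
/-!
Near a point `x` of `closure D(T)` at which `T` is locally bounded, weak* compactness of bounded
sets in `E*` together with maximality shows that every point of `closure D(T)` lies in `D(T)`.
If points outside `closure D(T)` came arbitrarily close to `x`, the Bishop–Phelps argument
(Ekeland's principle plus Hahn–Banach) would produce a support point `z` of the closed convex set
`closure D(T)` close to `x`, with a supporting functional `g ≠ 0`. Then `z ∈ D(T)`, and for
`z' ∈ T z` maximality puts the whole ray `z' + t • g` (`t ≥ 0`) into `T z`, contradicting local
boundedness. So a ball around `x` lies in `closure D(T)`, hence in `D(T)`.
-/

open Filter Topology Metric Bornology Set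

section Ekeland

variable {X : Type*} [MetricSpace X] {s : Set X} {φ : X → ℝ} {κ : ℝ} {w w' x : X}

def phelpsCone (s : Set X) (φ : X → ℝ) (κ : ℝ) (w : X) : Set X :=
  {y ∈ s | κ * dist y w ≤ φ y - φ w}

lemma self_mem_phelpsCone (hw : w ∈ s) : w ∈ phelpsCone s φ κ w := ⟨hw, by simp⟩

lemma phelpsCone_subset_phelpsCone (hκ : 0 ≤ κ) (hw : w ∈ phelpsCone s φ κ w') :
    phelpsCone s φ κ w ⊆ phelpsCone s φ κ w' := by
  rintro y ⟨hys, hy⟩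
  refine ⟨hys, ?_⟩
  have := mul_le_mul_of_nonneg_left (dist_triangle y w w') hκ
  linarith [hw.2]

lemma isClosed_phelpsCone (hs : IsClosed s) (hφ : ContinuousOn φ s) (w : X) :
    IsClosed (phelpsCone s φ κ w) :=
  hs.isClosed_le (continuousOn_const.mul (continuous_id.dist continuous_const).continuousOn)
    (hφ.sub continuousOn_const)

lemma exists_mem_phelpsCone_subset_closedBall (hκ : 0 < κ) (hbdd : BddAbove (φ '' s))
    (hw : w ∈ s) {r : ℝ} (hr : 0 < r) :
    ∃ w' ∈ phelpsCone s φ κ w, phelpsCone s φ κ w' ⊆ closedBall w' r := by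
  have hne : (φ '' phelpsCone s φ κ w).Nonempty :=
    ⟨_, mem_image_of_mem φ (self_mem_phelpsCone hw)⟩
  obtain ⟨_, ⟨w', hw', rfl⟩, hlt⟩ := exists_lt_of_lt_csSup hne (sub_lt_self _ (mul_pos hκ hr))
  refine ⟨w', hw', fun y hy => ?_⟩
  have hsup : φ y ≤ sSup (φ '' phelpsCone s φ κ w) :=
    le_csSup (hbdd.mono (image_mono fun _ h => h.1))
      (mem_image_of_mem φ (phelpsCone_subset_phelpsCone hκ.le hw' hy))
  exact (lt_of_mul_lt_mul_left (by linarith [hy.2]) hκ.le).le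

/-- Ekeland's variational principle, in the form used by Bishop and Phelps. -/
theorem exists_phelpsCone_eq_singleton [CompleteSpace X] (hs : IsClosed s)
    (hφ : ContinuousOn φ s) (hbdd : BddAbove (φ '' s)) (hκ : 0 < κ) (hx : x ∈ s) :
    ∃ ζ ∈ phelpsCone s φ κ x, phelpsCone s φ κ ζ = {ζ} := by
  choose! next hnext_mem hnext_ball using fun (n : ℕ) (w : X) (hw : w ∈ s) =>
    exists_mem_phelpsCone_subset_closedBall hκ hbdd hw (Nat.one_div_pos_of_nat (n := n))
  let z : ℕ → X := fun n => Nat.rec x next n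
  have hz_mem : ∀ n, z n ∈ s := fun n => by
    induction n with
    | zero => exact hx
    | succ n ih => exact (hnext_mem n _ ih).1
  have hz_succ : ∀ n, z (n + 1) ∈ phelpsCone s φ κ (z n) := fun n => hnext_mem n _ (hz_mem n)
  have hball : ∀ n, phelpsCone s φ κ (z (n + 1)) ⊆ closedBall (z (n + 1)) (1 / (n + 1)) :=
    fun n => hnext_ball n _ (hz_mem n)
  have hanti : Antitone fun n => phelpsCone s φ κ (z n) :=
    antitone_nat_of_succ_le fun n => phelpsCone_subset_phelpsCone hκ.le (hz_succ n)
  have hz_cone : ∀ m n, m ≤ n → z n ∈ phelpsCone s φ κ (z m) :=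
    fun m n h => hanti h (self_mem_phelpsCone (hz_mem n))
  have hcauchy : CauchySeq z := Metric.cauchySeq_iff'.2 fun ε hε => by
    obtain ⟨m, hm⟩ := exists_nat_one_div_lt hε
    exact ⟨m + 1, fun n hn => (hball m (hz_cone _ _ hn)).trans_lt hm⟩
  obtain ⟨ζ, hζ⟩ := cauchySeq_tendsto_of_complete hcauchy
  have hζ_cone : ∀ m, ζ ∈ phelpsCone s φ κ (z m) := fun m =>
    (isClosed_phelpsCone hs hφ _).mem_of_tendsto hζ
      ((eventually_ge_atTop m).mono fun n hn => hz_cone m n hn)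
  refine ⟨ζ, hζ_cone 0, subset_antisymm (fun y hy => ?_)
    (singleton_subset_iff.2 (self_mem_phelpsCone (hζ_cone 0).1))⟩
  refine eq_of_forall_dist_le fun ε hε => ?_
  obtain ⟨m, hm⟩ := exists_nat_one_div_lt (half_pos hε)
  have hy' := hball m (phelpsCone_subset_phelpsCone hκ.le (hζ_cone (m + 1)) hy)
  have hζ' := hball m (hζ_cone (m + 1))
  rw [mem_closedBall] at hy' hζ'
  linarith [dist_triangle_right y ζ (z (m + 1))]

end Ekeland

section SupportPoint

variable {E : Type*} [NormedAddCommGroup E] [NormedSpace ℝ E] {C s : Set E} {x z ζ : E}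

def IsSupportPoint (C : Set E) (z : E) : Prop :=
  z ∈ C ∧ ∃ g : StrongDual ℝ E, g ≠ 0 ∧ ∀ y ∈ C, g y ≤ g z

lemma IsSupportPoint.mono (h : IsSupportPoint C z) (hs : s ⊆ C) (hz : z ∈ s) :
    IsSupportPoint s z :=
  ⟨hz, h.2.imp fun _ hg => ⟨hg.1, fun y hy => hg.2 y (hs hy)⟩⟩

lemma exists_mul_norm_lt_apply {f : StrongDual ℝ E} {κ : ℝ} (hκ : 0 ≤ κ) (hκf : κ < ‖f‖) :
    ∃ v, κ * ‖v‖ < f v := by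
  obtain ⟨u, hu1, hu⟩ := f.exists_lt_apply_of_lt_opNorm hκf
  have hκu : κ * ‖u‖ < |f u| := (mul_le_of_le_one_right hκ hu1.le).trans_lt hu
  rcases le_total 0 (f u) with h | h
  · exact ⟨u, by rwa [abs_of_nonneg h] at hκu⟩
  · exact ⟨-u, by rwa [abs_of_nonpos h, ← map_neg, ← norm_neg] at hκu⟩

lemma isSupportPoint_of_phelpsCone_eq_singleton (hC : Convex ℝ C) {f : StrongDual ℝ E} {κ : ℝ}
    (hκ : 0 ≤ κ) (hκf : κ < ‖f‖) (hζ : phelpsCone C f κ ζ = {ζ}) : IsSupportPoint C ζ := by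
  have hζC : ζ ∈ C := (hζ.symm ▸ mem_singleton ζ : ζ ∈ phelpsCone C f κ ζ).1
  set K := {v : E | κ * ‖v‖ < f v}
  have hK_open : IsOpen K := isOpen_lt (continuous_const.mul continuous_norm) f.continuous
  have hK_conv : Convex ℝ K := by
    simpa [K] using (((convexOn_norm convex_univ).smul hκ).sub
      ((f : E →ₗ[ℝ] ℝ).concaveOn convex_univ)).convex_lt 0
  obtain ⟨v, hv⟩ := exists_mul_norm_lt_apply hκ hκf
  have hK_zero : (0 : E) ∈ closure K := by
    have h : Tendsto (fun t : ℝ => t • v) (𝓝[>] 0) (𝓝 0) := by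
      have := (continuous_id.smul continuous_const : Continuous fun t : ℝ => t • v).tendsto' 0 0
        (zero_smul ℝ v)
      exact this.mono_left nhdsWithin_le_nhds
    refine mem_closure_of_tendsto h (eventually_nhdsWithin_of_forall fun t (ht : 0 < t) => ?_)
    simpa [K, norm_smul, abs_of_pos ht, mul_left_comm] using mul_lt_mul_of_pos_left hv ht
  -- `K` is the Bishop–Phelps cone at `ζ` with its vertex moved to `0`
  have hdisj : Disjoint K ((ζ + ·) ⁻¹' C) := by
    refine disjoint_left.2 fun u huK huC => ?_
    have hu : ζ + u ∈ phelpsCone C f κ ζ := ⟨huC, by simpa [dist_eq_norm] using huK.le⟩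
    rw [hζ, mem_singleton_iff, add_eq_left] at hu
    simp [K, hu] at huK
  obtain ⟨g, ρ, hgK, hgC⟩ :=
    geometric_hahn_banach_open hK_conv hK_open (hC.translate_preimage_right ζ) hdisj
  have hρ : 0 ≤ ρ := by
    simpa using closure_lt_subset_le g.continuous continuous_const
      (closure_mono (fun u hu => hgK u hu) hK_zero)
  refine ⟨hζC, -g, neg_ne_zero.2 fun hg => ?_, fun y hy => ?_⟩
  · have := hgK v hv
    simp only [hg, zero_apply] at this
    have h0 := hgC 0 (by simpa using hζC)
    rw [map_zero] at h0
    linarith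
  · have := hgC (y - ζ) (by simpa using hy)
    simp only [map_sub] at this
    simp only [neg_apply, neg_le_neg_iff]
    linarith

theorem Convex.exists_isSupportPoint_near [CompleteSpace E] (hC : Convex ℝ C) (hcl : IsClosed C)
    (hx : x ∈ C) {z₀ : E} (hz₀ : z₀ ∉ C) :
    ∃ z, ‖z - x‖ ≤ 2 * ‖z₀ - x‖ ∧ IsSupportPoint C z := by
  obtain ⟨f, r, hfC, hfz₀⟩ := geometric_hahn_banach_closed_point hC hcl hz₀
  have hf : 0 < ‖f‖ := norm_pos_iff.2 fun h => by
    have := hfC x hx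
    simp only [h, zero_apply] at this hfz₀
    linarith
  obtain ⟨ζ, hζx, hζ⟩ := exists_phelpsCone_eq_singleton hcl f.continuous.continuousOn
    ⟨r, forall_mem_image.2 fun y hy => (hfC y hy).le⟩ (half_pos hf) hx
  refine ⟨ζ, ?_, isSupportPoint_of_phelpsCone_eq_singleton hC (half_pos hf).le
    (half_lt_self hf) hζ⟩
  have hζ_dist : ‖f‖ / 2 * ‖ζ - x‖ ≤ f ζ - f x := dist_eq_norm ζ x ▸ hζx.2
  have hz₀_dist : f z₀ - f x ≤ ‖f‖ * ‖z₀ - x‖ := by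
    rw [← map_sub]
    exact (le_abs_self _).trans (f.le_opNorm _)
  have := hfC ζ hζx.1
  refine le_of_mul_le_mul_left ?_ hf
  linarith

end SupportPoint

section LocallyBounded

variable {X Y : Type*} [TopologicalSpace X] [Bornology Y] {T : X → Set Y} {x : X}

def LocallyBoundedAt (T : X → Set Y) (x : X) : Prop :=
  ∃ U ∈ 𝓝 x, IsBounded (⋃ u ∈ U, T u)

lemma LocallyBoundedAt.eventually (h : LocallyBoundedAt T x) :
    ∀ᶠ y in 𝓝 x, LocallyBoundedAt T y := by
  obtain ⟨U, hU, hb⟩ := h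
  filter_upwards [eventually_mem_nhds_iff.2 hU] with y hy using ⟨U, hy, hb⟩

lemma LocallyBoundedAt.isBounded (h : LocallyBoundedAt T x) : IsBounded (T x) :=
  let ⟨_, hU, hb⟩ := h
  hb.subset (subset_biUnion_of_mem (mem_of_mem_nhds hU))

end LocallyBounded

lemma le_of_mapClusterPt_of_tendsto {ι α : Type*} [LinearOrder α] [DenselyOrdered α]
    [TopologicalSpace α] [OrderTopology α] {l : Filter ι} {a b : ι → α} {x y : α}
    (ha : MapClusterPt x l a) (hb : Tendsto b l (𝓝 y)) (hab : ∀ᶠ i in l, b i ≤ a i) : y ≤ x := by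
  by_contra! h
  obtain ⟨c, hxc, hcy⟩ := exists_between h
  obtain ⟨i, hai, hbi, habi⟩ := ((ha.frequently (Iio_mem_nhds hxc)).and_eventually
    ((hb.eventually (Ioi_mem_nhds hcy)).and hab)).exists
  exact (hai.trans hbi).not_ge habi

section MaximalMonotone

variable {E : Type*} [NormedAddCommGroup E] [NormedSpace ℝ E] {T : E → Set (StrongDual ℝ E)}
  {z w : E} {z' g : StrongDual ℝ E}

def MonotonicallyRelated (T : E → Set (StrongDual ℝ E)) (x : E) (x' : StrongDual ℝ E) : Prop :=
  ∀ y y', y' ∈ T y → 0 ≤ (x' - y') (x - y)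

/-- `→` is monotonicity and `←` is maximality. -/
def IsMaximalMonotone (T : E → Set (StrongDual ℝ E)) : Prop :=
  ∀ x x', x' ∈ T x ↔ MonotonicallyRelated T x x'

namespace IsMaximalMonotone

variable (hT : IsMaximalMonotone T)
include hT

lemma add_smul_mem (hz' : z' ∈ T z) (hg : ∀ y, (T y).Nonempty → g y ≤ g z) {t : ℝ} (ht : 0 ≤ t) :
    z' + t • g ∈ T z := by
  refine (hT z _).2 fun y y' hy' => ?_
  have h1 := (hT z z').1 hz' y y' hy'
  have h2 := hg y ⟨y', hy'⟩
  have h3 : (z' + t • g - y') (z - y) = (z' - y') (z - y) + t * (g z - g y) := by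
    simp only [sub_apply, add_apply, smul_apply, smul_eq_mul, map_sub]
    ring
  rw [h3]
  nlinarith

lemma not_isBounded_of_isSupportPoint (hz : IsSupportPoint {x | (T x).Nonempty} z) :
    ¬ IsBounded (T z) := by
  obtain ⟨⟨z', hz'⟩, g, hg0, hg⟩ := hz
  rw [isBounded_iff_forall_norm_le]
  rintro ⟨R, hR⟩
  have hg_pos : 0 < ‖g‖ := norm_pos_iff.2 hg0
  set t := (R + ‖z'‖ + 1) / ‖g‖
  have hR0 : 0 ≤ R := (norm_nonneg z').trans (hR z' hz')
  have ht : 0 ≤ t := div_nonneg (by linarith [norm_nonneg z']) hg_pos.le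
  have := hR _ (hT.add_smul_mem hz' hg ht)
  have hnorm : ‖t • g‖ = R + ‖z'‖ + 1 := by
    rw [norm_smul, Real.norm_of_nonneg ht, div_mul_cancel₀ _ hg_pos.ne']
  have htri := norm_le_add_norm_add (t • g) z'
  rw [add_comm (t • g)] at htri
  linarith

lemma mem_of_mapClusterPt {ι : Type*} {l : Filter ι} {u : ι → E} {f : ι → StrongDual ℝ E}
    {φ : WeakDual ℝ E} {M : ℝ} (hu : Tendsto u l (𝓝 w)) (hf : ∀ᶠ i in l, f i ∈ T (u i))
    (hM : ∀ᶠ i in l, ‖f i‖ ≤ M) (hφ : MapClusterPt φ l fun i => StrongDual.toWeakDual (f i)) :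
    WeakDual.toStrongDual φ ∈ T w := by
  refine (hT _ _).2 fun y y' hy' => ?_
  have ha : MapClusterPt (φ (w - y)) l fun i => f i (w - y) :=
    hφ.continuousAt_comp (WeakDual.eval_continuous (w - y)).continuousAt
  have hb : Tendsto (fun i => y' (u i - y) - M * ‖u i - w‖) l (𝓝 (y' (w - y))) := by
    have h1 := (y'.continuous.tendsto _).comp (hu.sub_const y)
    have h2 := (hu.sub_const w).norm.const_mul M
    simpa using h1.sub h2
  have hab : ∀ᶠ i in l, y' (u i - y) - M * ‖u i - w‖ ≤ f i (w - y) := by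
    filter_upwards [hf, hM] with i hfi hMi
    have h1 : 0 ≤ (f i - y') (u i - y) := (hT _ _).1 hfi y y' hy'
    have h2 : f i (u i - w) ≤ M * ‖u i - w‖ := (le_abs_self _).trans
      ((f i).le_opNorm _ |>.trans (mul_le_mul_of_nonneg_right hMi (norm_nonneg _)))
    have h3 : f i (w - y) = f i (u i - y) - f i (u i - w) := by
      rw [← map_sub, sub_sub_sub_cancel_left]
    rw [sub_apply, sub_nonneg] at h1
    linarith
  have := le_of_mapClusterPt_of_tendsto ha hb hab
  simpa [sub_nonneg] using this

lemma nonempty_of_mem_closure (hw : w ∈ closure {x | (T x).Nonempty})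
    (hlb : LocallyBoundedAt T w) : (T w).Nonempty := by
  obtain ⟨U, hU, hbdd⟩ := hlb
  obtain ⟨M, hM⟩ := isBounded_iff_forall_norm_le.1 hbdd
  have := mem_closure_iff_nhdsWithin_neBot.1 hw
  choose! f hf using fun x (hx : (T x).Nonempty) => hx
  have hf_ev : ∀ᶠ x in 𝓝[{x | (T x).Nonempty}] w, f x ∈ T x :=
    eventually_nhdsWithin_of_forall hf
  have hM_ev : ∀ᶠ x in 𝓝[{x | (T x).Nonempty}] w, ‖f x‖ ≤ M := by
    filter_upwards [hf_ev, nhdsWithin_le_nhds hU] with x hfx hxU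
    exact hM _ (mem_biUnion hxU hfx)
  obtain ⟨φ, -, hφ⟩ := (WeakDual.isCompact_closedBall (𝕜 := ℝ) (E := E) 0 M).exists_clusterPt
    (f := map (fun x => StrongDual.toWeakDual (f x)) (𝓝[{x | (T x).Nonempty}] w))
    (le_principal_iff.2 (hM_ev.mono fun x hx => by simpa using hx))
  exact ⟨_, hT.mem_of_mapClusterPt (tendsto_id.mono_left nhdsWithin_le_nhds) hf_ev hM_ev hφ⟩

end IsMaximalMonotone

end MaximalMonotone

/-- **Veselý.** Let `T` be maximal monotone on a real Banach space `E` with `closure D(T)`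
convex.  If `x ∈ closure D(T)` and `T` is locally bounded at `x`, then `x ∈ int D(T)`. -/
theorem vesely_interior_of_locally_bounded
    {E : Type*} [NormedAddCommGroup E] [NormedSpace ℝ E] [CompleteSpace E]
    (T : E → Set (StrongDual ℝ E))
    (hmono : ∀ x y x' y', x' ∈ T x → y' ∈ T y → 0 ≤ (x' - y') (x - y))
    (hmax : ∀ x x', (∀ y y', y' ∈ T y → 0 ≤ (x' - y') (x - y)) → x' ∈ T x)
    (hconv : Convex ℝ (closure {x | (T x).Nonempty}))
    (x : E) (hx : x ∈ closure {x | (T x).Nonempty})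
    (hlb : ∃ U ∈ nhds x, Bornology.IsBounded (⋃ u ∈ U, T u)) :
    x ∈ interior {x | (T x).Nonempty} := by
  have hT : IsMaximalMonotone T := fun x x' =>
    ⟨fun hx' y y' hy' => hmono x y x' y' hx' hy', hmax x x'⟩
  obtain ⟨ε, hε, hball⟩ := Metric.eventually_nhds_iff.1 (LocallyBoundedAt.eventually hlb)
  have hdom : ∀ w ∈ ball x ε, w ∈ closure {x | (T x).Nonempty} → (T w).Nonempty :=
    fun w hw hwD => hT.nonempty_of_mem_closure hwD (hball hw)
  have hcl : ball x (ε / 2) ⊆ closure {x | (T x).Nonempty} := by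
    intro z₀ hz₀
    by_contra hz₀D
    obtain ⟨z, hzx, hz⟩ := hconv.exists_isSupportPoint_near isClosed_closure hx hz₀D
    have hzε : z ∈ ball x ε := by
      rw [mem_ball, dist_eq_norm] at hz₀ ⊢
      linarith
    exact hT.not_isBounded_of_isSupportPoint (hz.mono subset_closure (hdom z hzε hz.1))
      (hball hzε).isBounded
  exact mem_interior.2 ⟨ball x (ε / 2),
    fun w hw => hdom w (ball_subset_ball (half_le_self hε.le) hw) (hcl hw),
    isOpen_ball, mem_ball_self (half_pos hε)⟩
end

section
/- (Rockafellar) Let T : E → 2^{E*} be a maximal monotone operator on a real Banach space E which is cyclically monotone and has D(T) ≠ ∅. Then there exists a proper lower semicontinuous convex function f on E such that T = ∂f, i.e. T(x) = ∂f(x) for every x ∈ E. -/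
/-!
Rockafellar's construction: fix `x₀ ∈ D(T)` and let `f z` be the supremum of
`⟨x₁*, z - x₁⟩ + ⟨x₂*, x₁ - x₂⟩ + ⋯ + ⟨xₙ*, xₙ₋₁ - xₙ⟩` over all chains `xₖ* ∈ T xₖ` with
`xₙ = x₀`. As a supremum of continuous affine functions `f` is convex and lower semicontinuous.
At `z = x₀` every such sum closes a cycle, so cyclic monotonicity gives `f x₀ ≤ 0` and `f` is
proper. Prepending `(x, x*)` to a chain shows `⟨x*, z - x⟩ + f x ≤ f z`, i.e. `T ⊆ ∂f`; as the
subdifferential of a proper function is monotone, maximality of `T` forces `T = ∂f`.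
-/

open Function

section SupremumOfAffine

variable {ι : Sort*} {E : Type*} [AddCommGroup E] [Module ℝ E]

theorem iSup_coe_combo_le {g : ι → E → ℝ}
    (hg : ∀ i x y (a b : ℝ), a + b = 1 → g i (a • x + b • y) = a * g i x + b * g i y)
    {x y : E} {a b : ℝ} (ha : 0 ≤ a) (hb : 0 ≤ b) (hab : a + b = 1) :
    ⨆ i, (g i (a • x + b • y) : EReal) ≤
      (a : EReal) * (⨆ i, (g i x : EReal)) + (b : EReal) * ⨆ i, (g i y : EReal) := by
  refine iSup_le fun i => ?_
  rw [hg i x y a b hab, EReal.coe_add, EReal.coe_mul, EReal.coe_mul]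
  exact add_le_add
    (mul_le_mul_of_nonneg_left (le_iSup (fun i => (g i x : EReal)) i) (EReal.coe_nonneg.2 ha))
    (mul_le_mul_of_nonneg_left (le_iSup (fun i => (g i y : EReal)) i) (EReal.coe_nonneg.2 hb))

end SupremumOfAffine

section ConvexAnalysis

variable {E : Type*} [AddCommGroup E] [Module ℝ E] [TopologicalSpace E]

section Subdifferential

def subdifferential (f : E → EReal) (x : E) : Set (E →L[ℝ] ℝ) :=
  {x' | ∀ y, ((x' (y - x) : ℝ) : EReal) + f x ≤ f y}

variable {f : E → EReal} {x y x₀ : E} {x' y' : E →L[ℝ] ℝ}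

theorem ne_top_of_mem_subdifferential (hx' : x' ∈ subdifferential f x) (hx₀ : f x₀ ≠ ⊤) :
    f x ≠ ⊤ := by
  intro h
  have := hx' x₀
  rw [h, EReal.add_top_of_ne_bot (EReal.coe_ne_bot _), top_le_iff] at this
  exact hx₀ this

theorem subdifferential_monotone (hbot : ∀ x, f x ≠ ⊥) (hx₀ : f x₀ ≠ ⊤)
    (hx' : x' ∈ subdifferential f x) (hy' : y' ∈ subdifferential f y) :
    0 ≤ (x' - y') (x - y) := by
  obtain ⟨r, hr⟩ : ∃ r : ℝ, f x = r :=
    ⟨(f x).toReal, (EReal.coe_toReal (ne_top_of_mem_subdifferential hx' hx₀) (hbot x)).symm⟩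
  obtain ⟨s, hs⟩ : ∃ s : ℝ, f y = s :=
    ⟨(f y).toReal, (EReal.coe_toReal (ne_top_of_mem_subdifferential hy' hx₀) (hbot y)).symm⟩
  have hxy : x' (y - x) + r ≤ s := by exact_mod_cast hr ▸ hs ▸ hx' y
  have hyx : y' (x - y) + s ≤ r := by exact_mod_cast hr ▸ hs ▸ hy' x
  simp only [sub_apply, map_sub] at hxy hyx ⊢
  linarith

end Subdifferential

section CyclicMonotonicity

def cycleSum (n : ℕ) (x : ℕ → E) (x' : ℕ → E →L[ℝ] ℝ) : ℝ :=
  ∑ k ∈ Finset.Icc 1 n, x' k (x k - x (k - 1))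

def CyclicallyMonotone (T : E → Set (E →L[ℝ] ℝ)) : Prop :=
  ∀ n : ℕ, 2 ≤ n → ∀ (x : ℕ → E) (x' : ℕ → E →L[ℝ] ℝ),
    x n = x 0 → (∀ k, 1 ≤ k → k ≤ n → x' k ∈ T (x k)) → 0 ≤ cycleSum n x x'

theorem cycleSum_eq_sum_range (n : ℕ) (x : ℕ → E) (x' : ℕ → E →L[ℝ] ℝ) :
    cycleSum n x x' = ∑ k ∈ Finset.range n, x' (k + 1) (x (k + 1) - x k) := by
  rw [cycleSum, ← Finset.Ico_add_one_right_eq_Icc, Finset.sum_Ico_eq_sum_range]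
  exact Finset.sum_congr rfl fun k _ => by simp [add_comm]

theorem cycleSum_update_zero_sub {n : ℕ} (hn : 1 ≤ n) (x : ℕ → E) (x' : ℕ → E →L[ℝ] ℝ)
    (z w : E) : cycleSum n (update x 0 z) x' - cycleSum n (update x 0 w) x' = x' 1 (w - z) := by
  rw [cycleSum_eq_sum_range, cycleSum_eq_sum_range, ← Finset.sum_sub_distrib,
    Finset.sum_eq_single 0]
  · simp
  · intro k _ hk
    simp [update_of_ne hk]
  · exact fun h => absurd (Finset.mem_range.2 hn) h

theorem cycleSum_succ_update_comp_pred (n : ℕ) (x : ℕ → E) (x' : ℕ → E →L[ℝ] ℝ) (y z : E)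
    (y' : E →L[ℝ] ℝ) :
    cycleSum (n + 1) (update (update x 0 y ∘ (· - 1)) 0 z) (update x' 0 y' ∘ (· - 1)) =
      y' (y - z) + cycleSum n (update x 0 y) x' := by
  rw [cycleSum_eq_sum_range, cycleSum_eq_sum_range, Finset.sum_range_succ', add_comm]
  simp

end CyclicMonotonicity

/-- `point 0` is a free slot: `value z` fills it with `z`, turning minus the cycle sum into
Rockafellar's sum `⟨x₁*, z - x₁⟩ + ⟨x₂*, x₁ - x₂⟩ + ⋯ + ⟨xₙ*, xₙ₋₁ - xₙ⟩`. -/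
structure RockafellarChain (T : E → Set (E →L[ℝ] ℝ)) (x₀ : E) where
  length : ℕ
  one_le_length : 1 ≤ length
  point : ℕ → E
  grad : ℕ → E →L[ℝ] ℝ
  point_length : point length = x₀
  grad_mem : ∀ k, 1 ≤ k → k ≤ length → grad k ∈ T (point k)

namespace RockafellarChain

variable {T : E → Set (E →L[ℝ] ℝ)} {x₀ : E}

def single {x₀' : E →L[ℝ] ℝ} (hx₀ : x₀' ∈ T x₀) : RockafellarChain T x₀ where
  length := 1
  one_le_length := le_rfl
  point _ := x₀
  grad _ := x₀'
  point_length := rfl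
  grad_mem _ _ _ := hx₀

def cons (c : RockafellarChain T x₀) {x : E} {x' : E →L[ℝ] ℝ} (hx : x' ∈ T x) :
    RockafellarChain T x₀ where
  length := c.length + 1
  one_le_length := Nat.le_add_left 1 _
  point := update c.point 0 x ∘ (· - 1)
  grad := update c.grad 0 x' ∘ (· - 1)
  point_length := by simp [update_of_ne (Nat.one_le_iff_ne_zero.1 c.one_le_length), c.point_length]
  grad_mem k hk hkn := by
    rcases eq_or_ne (k - 1) 0 with h | h
    · simpa [h] using hx
    · simpa [update_of_ne h] using c.grad_mem (k - 1) (by omega) (by omega)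

def value (c : RockafellarChain T x₀) (z : E) : ℝ :=
  -cycleSum c.length (update c.point 0 z) c.grad

theorem value_eq_grad_one_add (c : RockafellarChain T x₀) (z : E) :
    c.value z = c.grad 1 z + c.value 0 := by
  have := cycleSum_update_zero_sub c.one_le_length c.point c.grad z 0
  simp only [value, zero_sub, map_neg] at this ⊢
  linarith

theorem value_combo (c : RockafellarChain T x₀) (x y : E) {a b : ℝ} (hab : a + b = 1) :
    c.value (a • x + b • y) = a * c.value x + b * c.value y := by
  rw [c.value_eq_grad_one_add, c.value_eq_grad_one_add x, c.value_eq_grad_one_add y, map_add,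
    map_smul, map_smul, smul_eq_mul, smul_eq_mul]
  linear_combination (-c.value 0) * hab

theorem continuous_value (c : RockafellarChain T x₀) : Continuous c.value :=
  ((c.grad 1).continuous.add continuous_const).congr fun z => (c.value_eq_grad_one_add z).symm

theorem value_cons (c : RockafellarChain T x₀) {x : E} {x' : E →L[ℝ] ℝ} (hx : x' ∈ T x) (z : E) :
    (c.cons hx).value z = x' (z - x) + c.value x := by
  simp only [value, cons, cycleSum_succ_update_comp_pred, map_sub]
  ring

theorem value_self_nonpos (hT : CyclicallyMonotone T) (c : RockafellarChain T x₀) :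
    c.value x₀ ≤ 0 := by
  rw [value, neg_nonpos]
  rcases c.one_le_length.eq_or_lt with h | h
  · simp [cycleSum, ← h, ← c.point_length]
  · refine hT _ h _ _ (by rw [update_of_ne (by omega), c.point_length, update_self])
      fun k hk hkn => ?_
    simpa [update_of_ne (Nat.one_le_iff_ne_zero.1 hk)] using c.grad_mem k hk hkn

end RockafellarChain

section RockafellarFunction

variable {T : E → Set (E →L[ℝ] ℝ)} {x₀ : E}

noncomputable def rockafellarFunction (T : E → Set (E →L[ℝ] ℝ)) (x₀ z : E) : EReal :=
  ⨆ c : RockafellarChain T x₀, (c.value z : EReal)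

theorem rockafellarFunction_ne_bot {x₀' : E →L[ℝ] ℝ} (hx₀ : x₀' ∈ T x₀) (z : E) :
    rockafellarFunction T x₀ z ≠ ⊥ :=
  ne_bot_of_le_ne_bot (EReal.coe_ne_bot _)
    (le_iSup (fun c : RockafellarChain T x₀ => (c.value z : EReal)) (.single hx₀))

theorem rockafellarFunction_self_nonpos (hT : CyclicallyMonotone T) :
    rockafellarFunction T x₀ x₀ ≤ 0 :=
  iSup_le fun c => EReal.coe_nonpos.2 (c.value_self_nonpos hT)

theorem lowerSemicontinuous_rockafellarFunction (T : E → Set (E →L[ℝ] ℝ)) (x₀ : E) :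
    LowerSemicontinuous (rockafellarFunction T x₀) :=
  lowerSemicontinuous_iSup fun c =>
    (continuous_coe_real_ereal.comp c.continuous_value).lowerSemicontinuous

theorem rockafellarFunction_combo_le {x y : E} {a b : ℝ} (ha : 0 ≤ a) (hb : 0 ≤ b)
    (hab : a + b = 1) :
    rockafellarFunction T x₀ (a • x + b • y) ≤
      (a : EReal) * rockafellarFunction T x₀ x + (b : EReal) * rockafellarFunction T x₀ y :=
  iSup_coe_combo_le (fun c x y _ _ hab => c.value_combo x y hab) ha hb hab

theorem mem_subdifferential_rockafellarFunction {x : E} {x' : E →L[ℝ] ℝ} (hx : x' ∈ T x) :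
    x' ∈ subdifferential (rockafellarFunction T x₀) x := by
  intro y
  have hne_bot : ((x' (y - x) : ℝ) : EReal) ≠ ⊥ ∨ rockafellarFunction T x₀ y ≠ ⊥ :=
    .inl (EReal.coe_ne_bot _)
  have hne_top : ((x' (y - x) : ℝ) : EReal) ≠ ⊤ ∨ rockafellarFunction T x₀ y ≠ ⊤ :=
    .inl (EReal.coe_ne_top _)
  rw [add_comm, ← EReal.le_sub_iff_add_le hne_bot hne_top]
  refine iSup_le fun c => ?_
  rw [EReal.le_sub_iff_add_le hne_bot hne_top, ← EReal.coe_add, add_comm, ← c.value_cons hx]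
  exact le_iSup (fun c : RockafellarChain T x₀ => (c.value y : EReal)) (c.cons hx)

end RockafellarFunction

end ConvexAnalysis

theorem cyclically_monotone_eq_subdifferential_general
    {E : Type*} [NormedAddCommGroup E] [NormedSpace ℝ E]
    (T : E → Set (StrongDual ℝ E))
    (hmax : ∀ x x', (∀ y y', y' ∈ T y → 0 ≤ (x' - y') (x - y)) → x' ∈ T x)
    (hcyc : ∀ n : ℕ, 2 ≤ n → ∀ (x : ℕ → E) (x' : ℕ → StrongDual ℝ E),
      x n = x 0 → (∀ k, 1 ≤ k → k ≤ n → x' k ∈ T (x k)) →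
      0 ≤ ∑ k ∈ Finset.Icc 1 n, (x' k) (x k - x (k - 1)))
    (hD : ∃ x, (T x).Nonempty) :
    ∃ f : E → EReal,
      (∀ x, f x ≠ ⊥) ∧ (∃ x, f x ≠ ⊤) ∧ LowerSemicontinuous f ∧
      (∀ x y : E, ∀ a b : ℝ, 0 ≤ a → 0 ≤ b → a + b = 1 →
        f (a • x + b • y) ≤ (a : EReal) * f x + (b : EReal) * f y) ∧
      ∀ x : E, T x = {x' : StrongDual ℝ E | ∀ y, ((x' (y - x) : ℝ) : EReal) + f x ≤ f y} := by
  obtain ⟨x₀, x₀', hx₀⟩ := hD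
  have hT : CyclicallyMonotone T := hcyc
  have hbot : ∀ x, rockafellarFunction T x₀ x ≠ ⊥ := rockafellarFunction_ne_bot hx₀
  have htop : rockafellarFunction T x₀ x₀ ≠ ⊤ :=
    ((rockafellarFunction_self_nonpos hT).trans_lt EReal.zero_lt_top).ne
  refine ⟨rockafellarFunction T x₀, hbot, ⟨x₀, htop⟩, lowerSemicontinuous_rockafellarFunction T x₀,
    fun x y a b ha hb hab => rockafellarFunction_combo_le ha hb hab, fun x => ?_⟩
  refine Set.Subset.antisymm (fun x' => mem_subdifferential_rockafellarFunction) fun x' hx' => ?_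
  exact hmax x x' fun y y' hy' =>
    subdifferential_monotone hbot htop hx' (mem_subdifferential_rockafellarFunction hy')

/-- **Rockafellar.** A maximal monotone, cyclically monotone operator `T` with `D(T) ≠ ∅` on a
real Banach space `E` is the subdifferential of a proper lower semicontinuous convex function
`f` (with values in `ℝ ∪ {∞}`, modelled as `EReal` with `f x ≠ ⊥`). -/
theorem cyclically_monotone_eq_subdifferential
    {E : Type*} [NormedAddCommGroup E] [NormedSpace ℝ E] [CompleteSpace E]
    (T : E → Set (StrongDual ℝ E))
    (hmono : ∀ x y x' y', x' ∈ T x → y' ∈ T y → 0 ≤ (x' - y') (x - y))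
    (hmax : ∀ x x', (∀ y y', y' ∈ T y → 0 ≤ (x' - y') (x - y)) → x' ∈ T x)
    (hcyc : ∀ n : ℕ, 2 ≤ n → ∀ (x : ℕ → E) (x' : ℕ → StrongDual ℝ E),
      x n = x 0 → (∀ k, 1 ≤ k → k ≤ n → x' k ∈ T (x k)) →
      0 ≤ ∑ k ∈ Finset.Icc 1 n, (x' k) (x k - x (k - 1)))
    (hD : ∃ x, (T x).Nonempty) :
    ∃ f : E → EReal,
      (∀ x, f x ≠ ⊥) ∧ (∃ x, f x ≠ ⊤) ∧ LowerSemicontinuous f ∧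
      (∀ x y : E, ∀ a b : ℝ, 0 ≤ a → 0 ≤ b → a + b = 1 →
        f (a • x + b • y) ≤ (a : EReal) * f x + (b : EReal) * f y) ∧
      ∀ x : E, T x = {x' : StrongDual ℝ E | ∀ y, ((x' (y - x) : ℝ) : EReal) + f x ≤ f y} :=
  cyclically_monotone_eq_subdifferential_general T hmax hcyc hD
end
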